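/- arXiv:0909.2381 — 2 statements merged into one kernel-verified Lean document; each statement's English description precedes it below -/
import Mathlib

section
/- Let G be a topological group with a base of neighborhoods of the identity consisting of open subgroups (a linear group). A faithfully indexed sequence {a_n} in G converges to the identity if and only if, for every z : ℕ → ℤ and every bijection φ : ℕ → ℕ, the sequence {a_{φ(n)}^{z(n)}} is Cauchy productive. -/
open Filter Topology

def LeftCauchy {G : Type*} [Group G] [TopologicalSpace G] (a : ℕ → G) : Prop :=
  ∀ U ∈ 𝓝 (1 : G), ∃ n : ℕ, ∀ k ≥ n, ∀ l ≥ n, (a k)⁻¹ * a l ∈ U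

def partProd {G : Type*} [Monoid G] (b : ℕ → G) (n : ℕ) : G :=
  ((List.range n).map b).prod

def CauchyProductive {G : Type*} [Group G] [TopologicalSpace G] (b : ℕ → G) : Prop :=
  LeftCauchy (fun n => partProd b (n + 1))

/-!
If every term from index `n` on lies in a subgroup `H`, so does every block `b k ⋯ b l` with
`n ≤ k`. As open subgroups form a base at `1`, a sequence converging to `1` is therefore Cauchy
productive; and `a (φ n) ^ z n → 1` whenever `a → 1` and `φ` is injective, since subgroups are
closed under powers. Conversely, `b (n + 1)` is the quotient of two consecutive partial products,
so every Cauchy productive sequence converges to `1`.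
-/

theorem partProd_succ {G : Type*} [Monoid G] (b : ℕ → G) (n : ℕ) :
    partProd b (n + 1) = partProd b n * b n := by
  simp [partProd, List.range_succ]

section Subgroup

variable {G : Type*} [Group G] {H : Subgroup G} {b : ℕ → G} {n : ℕ}

theorem inv_partProd_mul_partProd_mem_of_le (hb : ∀ i ≥ n, b i ∈ H) {m : ℕ} (hm : n ≤ m) :
    (partProd b n)⁻¹ * partProd b m ∈ H := by
  induction m, hm using Nat.le_induction with
  | base => simp [H.one_mem]
  | succ m hnm ih =>
    rw [partProd_succ, ← mul_assoc]
    exact H.mul_mem ih (hb m hnm)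

theorem inv_partProd_mul_partProd_mem (hb : ∀ i ≥ n, b i ∈ H) {k l : ℕ} (hk : n ≤ k)
    (hl : n ≤ l) : (partProd b k)⁻¹ * partProd b l ∈ H := by
  simpa [mul_assoc] using H.mul_mem (H.inv_mem (inv_partProd_mul_partProd_mem_of_le hb hk))
    (inv_partProd_mul_partProd_mem_of_le hb hl)

end Subgroup

section LinearGroup

variable {G : Type*} [Group G] [TopologicalSpace G] {b : ℕ → G}

theorem CauchyProductive.tendsto_one (hb : CauchyProductive b) : Tendsto b atTop (𝓝 1) := by
  rw [← tendsto_add_atTop_iff_nat 1, tendsto_atTop']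
  intro U hU
  obtain ⟨n, hn⟩ := hb U hU
  refine ⟨n, fun m hm => ?_⟩
  simpa [partProd_succ _ (m + 1), mul_assoc] using hn m hm (m + 1) (by omega)

variable (hlin : ∀ V ∈ 𝓝 (1 : G), ∃ H : Subgroup G, IsOpen (H : Set G) ∧ (H : Set G) ⊆ V)
include hlin

theorem tendsto_zpow_one_of_tendsto_one (hb : Tendsto b atTop (𝓝 1)) (z : ℕ → ℤ) :
    Tendsto (fun n => b n ^ z n) atTop (𝓝 1) := by
  intro U hU
  obtain ⟨H, hHo, hHU⟩ := hlin U hU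
  exact (hb.eventually_mem (hHo.mem_nhds H.one_mem)).mono fun n hn => hHU (H.zpow_mem hn _)

theorem cauchyProductive_of_tendsto_one (hb : Tendsto b atTop (𝓝 1)) : CauchyProductive b := by
  intro U hU
  obtain ⟨H, hHo, hHU⟩ := hlin U hU
  obtain ⟨n, hn⟩ := eventually_atTop.1 (hb (hHo.mem_nhds H.one_mem))
  exact ⟨n, fun k hk l hl => hHU (inv_partProd_mul_partProd_mem hn (by omega) (by omega))⟩

end LinearGroup

theorem stmt_11_general {G : Type*} [Group G] [TopologicalSpace G]
    (hlin : ∀ V ∈ 𝓝 (1 : G), ∃ H : Subgroup G, IsOpen (H : Set G) ∧ (H : Set G) ⊆ V)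
    (a : ℕ → G) :
    Tendsto a atTop (𝓝 (1 : G)) ↔
      ∀ z : ℕ → ℤ, ∀ φ : ℕ → ℕ, Function.Bijective φ →
        CauchyProductive (fun n => a (φ n) ^ z n) := by
  refine ⟨fun ha z φ hφ => ?_, fun h => ?_⟩
  · have haφ : Tendsto (a ∘ φ) atTop (𝓝 1) := ha.comp hφ.injective.nat_tendsto_atTop
    exact cauchyProductive_of_tendsto_one hlin (tendsto_zpow_one_of_tendsto_one hlin haφ z)
  · simpa using (h 1 id Function.bijective_id).tendsto_one

/-- In a linear topological group (open subgroups form a neighborhood base at the identity),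
a faithfully indexed sequence `a` converges to the identity iff for every `z : ℕ → ℤ` and
every bijection `φ : ℕ → ℕ` the sequence `fun n => a (φ n) ^ z n` is Cauchy productive. -/
theorem stmt_11 {G : Type*} [Group G] [TopologicalSpace G] [IsTopologicalGroup G]
    (hlin : ∀ V ∈ 𝓝 (1 : G), ∃ H : Subgroup G, IsOpen (H : Set G) ∧ (H : Set G) ⊆ V)
    (a : ℕ → G) (ha : Function.Injective a) :
    Tendsto a atTop (𝓝 (1 : G)) ↔
      ∀ z : ℕ → ℤ, ∀ φ : ℕ → ℕ, Function.Bijective φ →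
        CauchyProductive (fun n => a (φ n) ^ z n) :=
  stmt_11_general hlin a
end

section
/- A topological group containing an f_1*-productive sequence has cardinality at least the continuum 𝔠. -/
open Filter Topology

/-- A faithfully indexed sequence `a` is `f_1*`-productive if for every strictly increasing
`μ : ℕ → ℕ` the partial products `a (μ 0) * ⋯ * a (μ k)` converge as `k → ∞`. -/
def F1StarProductive {G : Type*} [Group G] [TopologicalSpace G] (a : ℕ → G) : Prop :=
  Function.Injective a ∧
    ∀ μ : ℕ → ℕ, StrictMono μ →
      ∃ x : G, Tendsto (fun k => partProd (fun i => a (μ i)) (k + 1)) atTop (𝓝 x)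

/-
Convergence along every strictly increasing subsequence gives convergence of the
indicator products `∏_{i<m} a_i^{[i ∈ S]}` for every `S ⊆ ℕ` (reindex along `Nat.nth S`).
These satisfy a uniform Cauchy condition: for every neighbourhood `U` of `1` there is `N` such that
every block product `∏_{n ≤ i < m} a_i^{[i ∈ S]}` with `N ≤ n` lies in `U`, since infinitely many
disjoint blocks outside `U` would glue to a single `S` whose products do not converge.
So one can choose indices `E 0 < E 1 < ⋯` with `a (E k) ≠ 1` and neighbourhoods `V k` of `1` with
`a (E k) * V k` disjoint from `V k`, such that the tail of every limit beyond `E (k + 1)` lies in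
`V k`. Then `Z ↦ lim ∏ a_i^{[i ∈ E '' Z]}` is injective on `Set ℕ`: if `k` is the first index where
`Z` and `W` differ, the two limits are `P * a (E k) * t` and `P * t'` with `t, t' ∈ V k`.
-/

section Monoid

variable {M : Type*} [Monoid M]

theorem partProd_succ_s13 (f : ℕ → M) (n : ℕ) : partProd f (n + 1) = partProd f n * f n := by
  simp [partProd, List.range_succ]

theorem partProd_congr {f g : ℕ → M} {n : ℕ} (h : ∀ i < n, f i = g i) :
    partProd f n = partProd g n :=
  congrArg List.prod <| List.map_congr_left fun i hi => h i (List.mem_range.mp hi)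

theorem partProd_eq_of_eq_one {f : ℕ → M} {n m : ℕ} (hnm : n ≤ m)
    (h : ∀ i, n ≤ i → i < m → f i = 1) : partProd f m = partProd f n := by
  induction m, hnm using Nat.le_induction with
  | base => rfl
  | succ m hnm ih =>
    rw [partProd_succ_s13, h m hnm m.lt_succ_self, mul_one, ih fun i hni him => h i hni (by omega)]

theorem partProd_mulIndicator_eq_partProd_nth {S : Set ℕ} [DecidablePred (· ∈ S)] (f : ℕ → M)
    (m : ℕ) : partProd (S.mulIndicator f) m =
      partProd (fun i => f (Nat.nth (· ∈ S) i)) (Nat.count (· ∈ S) m) := by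
  induction m with
  | zero => rfl
  | succ m ih =>
    by_cases hm : m ∈ S
    · rw [Nat.count_succ, if_pos hm, partProd_succ_s13, partProd_succ_s13, ih, Nat.nth_count hm,
        Set.mulIndicator_of_mem hm]
    · rw [Nat.count_succ, if_neg hm, partProd_succ_s13, ih, Set.mulIndicator_of_notMem hm, mul_one,
        add_zero]

theorem partProd_mulIndicator_image {E : ℕ → ℕ} (hE : StrictMono E) (Z : Set ℕ) (f : ℕ → M)
    (k : ℕ) : partProd ((E '' Z).mulIndicator f) (E k) = partProd (Z.mulIndicator (f ∘ E)) k := by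
  induction k with
  | zero =>
    refine partProd_eq_of_eq_one (Nat.zero_le _) fun i _ hi => Set.mulIndicator_of_notMem ?_ f
    rintro ⟨j, -, rfl⟩
    exact absurd (hE.lt_iff_lt.mp hi) (Nat.not_lt_zero j)
  | succ k ih =>
    have hgap : ∀ i, E k + 1 ≤ i → i < E (k + 1) → (E '' Z).mulIndicator f i = 1 := by
      rintro i hki hik
      refine Set.mulIndicator_of_notMem ?_ f
      rintro ⟨j, -, rfl⟩
      have := hE.lt_iff_lt.mp hik
      have := hE.lt_iff_lt.mp (Nat.lt_of_succ_le hki)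
      omega
    rw [partProd_eq_of_eq_one (hE k.lt_succ_self) hgap, partProd_succ_s13, partProd_succ_s13, ih,
      Set.mulIndicator_image hE.injective]

end Monoid

theorem inv_partProd_mul_partProd_congr {G : Type*} [Group G] {f g : ℕ → G} {n m : ℕ} (hnm : n ≤ m)
    (h : ∀ i, n ≤ i → i < m → f i = g i) :
    (partProd f n)⁻¹ * partProd f m = (partProd g n)⁻¹ * partProd g m := by
  induction m, hnm using Nat.le_induction with
  | base => simp
  | succ m hnm ih =>
    rw [partProd_succ_s13, partProd_succ_s13, ← mul_assoc, ← mul_assoc,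
      ih fun i hni him => h i hni (by omega), h m hnm m.lt_succ_self]

namespace F1StarProductive

variable {G : Type*} [Group G] [TopologicalSpace G] {a : ℕ → G}

theorem exists_tendsto_partProd_mulIndicator (ha : F1StarProductive a) (S : Set ℕ) :
    ∃ x, Tendsto (fun m => partProd (S.mulIndicator a) m) atTop (𝓝 x) := by
  classical
  rcases S.finite_or_infinite with hS | hS
  · obtain ⟨B, hB⟩ := hS.bddAbove
    refine ⟨_, tendsto_atTop_of_eventually_const (i₀ := B + 1) fun m hm =>
      partProd_eq_of_eq_one hm fun i hi _ => Set.mulIndicator_of_notMem (fun hiS => ?_) a⟩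
    exact absurd (hB hiS) (by omega)
  · obtain ⟨x, hx⟩ := ha.2 _ (Nat.nth_strictMono hS)
    have hcount : Tendsto (Nat.count (· ∈ S)) atTop atTop :=
      tendsto_atTop_atTop_of_monotone (Nat.count_monotone _) fun k =>
        ⟨Nat.nth (· ∈ S) k, (Nat.count_nth_of_infinite (p := (· ∈ S)) hS k).ge⟩
    refine ⟨x, ?_⟩
    simp only [partProd_mulIndicator_eq_partProd_nth]
    exact ((tendsto_add_atTop_iff_nat 1).mp hx).comp hcount

variable [IsTopologicalGroup G]

theorem exists_forall_inv_partProd_mul_partProd_mem (ha : F1StarProductive a) {U : Set G}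
    (hU : U ∈ 𝓝 1) : ∃ N, ∀ (S : Set ℕ) (n m : ℕ), N ≤ n → n ≤ m →
      (partProd (S.mulIndicator a) n)⁻¹ * partProd (S.mulIndicator a) m ∈ U := by
  by_contra! h
  choose S n m hNn hnm hout using h
  obtain ⟨B, hB⟩ : ∃ B : ℕ → ℕ, ∀ j, B (j + 1) = m (B j) + 1 :=
    ⟨fun j => Nat.rec 0 (fun _ b => m b + 1) j, fun _ => rfl⟩
  have hBmono : StrictMono B := strictMono_nat_of_lt_succ fun j => by
    have := hNn (B j); have := hnm (B j); rw [hB]; omega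
  have hsep : ∀ l j, l < j → m (B l) < n (B j) := fun l j hlj => by
    have := hBmono.monotone (Nat.succ_le_of_lt hlj); have := hNn (B j); rw [hB] at *; omega
  -- the blocks `[n (B j), m (B j))` are pairwise disjoint, so they can be glued into one set
  let T : Set ℕ := {i | ∃ j, i ∈ S (B j) ∧ n (B j) ≤ i ∧ i < m (B j)}
  have hT : ∀ j i, n (B j) ≤ i → i < m (B j) →
      T.mulIndicator a i = (S (B j)).mulIndicator a i := by
    refine fun j i hni him => Set.mulIndicator_eq_mulIndicator
      ⟨fun ⟨l, hl, hnl, hml⟩ => ?_, fun hi => ⟨j, hi, hni, him⟩⟩ rfl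
    rcases lt_trichotomy l j with hlj | rfl | hlj
    · exact absurd (hsep l j hlj) (by omega)
    · exact hl
    · exact absurd (hsep j l hlj) (by omega)
  obtain ⟨x, hx⟩ := ha.exists_tendsto_partProd_mulIndicator T
  have hn : Tendsto (fun j => n (B j)) atTop atTop :=
    tendsto_atTop_mono (fun j => (hBmono.id_le j).trans (hNn _)) tendsto_id
  have hm : Tendsto (fun j => m (B j)) atTop atTop := tendsto_atTop_mono (fun j => hnm _) hn
  have hlim : Tendsto (fun j => (partProd (T.mulIndicator a) (n (B j)))⁻¹ *
      partProd (T.mulIndicator a) (m (B j))) atTop (𝓝 1) := by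
    simpa using (hx.comp hn).inv.mul (hx.comp hm)
  obtain ⟨j, hj⟩ := (hlim.eventually_mem hU).exists
  rw [inv_partProd_mul_partProd_congr (hnm _) (hT j)] at hj
  exact hout _ hj

theorem exists_forall_inv_partProd_mul_mem_of_tendsto (ha : F1StarProductive a) {V : Set G}
    (hV : V ∈ 𝓝 1) : ∃ N, ∀ (S : Set ℕ) (x : G),
      Tendsto (fun m => partProd (S.mulIndicator a) m) atTop (𝓝 x) →
      ∀ n, N ≤ n → (partProd (S.mulIndicator a) n)⁻¹ * x ∈ V := by
  obtain ⟨C, hC, hCcl, hCV⟩ := exists_mem_nhds_isClosed_subset hV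
  obtain ⟨N, hN⟩ := ha.exists_forall_inv_partProd_mul_partProd_mem hC
  refine ⟨N, fun S x hx n hn => hCV (hCcl.mem_of_tendsto (hx.const_mul _) ?_)⟩
  filter_upwards [eventually_ge_atTop n] with m hm using hN S n m hn hm

end F1StarProductive

theorem exists_mem_nhds_one_forall_mul_ne {M : Type*} [MulOneClass M] [TopologicalSpace M]
    [ContinuousMul M] [T2Space M] {c : M} (hc : c ≠ 1) :
    ∃ V ∈ 𝓝 (1 : M), ∀ u ∈ V, ∀ w ∈ V, c * u ≠ w := by
  obtain ⟨A, B, hA, hB, hAB⟩ := t2_separation_nhds hc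
  refine ⟨(c * ·) ⁻¹' A ∩ B, Filter.inter_mem
    ((continuous_const_mul c).continuousAt.preimage_mem_nhds (by simpa using hA)) hB, ?_⟩
  rintro u ⟨hu, -⟩ w ⟨-, hw⟩ rfl
  exact hAB.ne_of_mem hu hw rfl

theorem F1StarProductive.exists_strictMono_separating {G : Type*} [Group G] [TopologicalSpace G]
    [IsTopologicalGroup G] [T2Space G] {a : ℕ → G} (ha : F1StarProductive a) :
    ∃ E : ℕ → ℕ, StrictMono E ∧ ∃ V : ℕ → Set G, ∀ k,
      (∀ u ∈ V k, ∀ w ∈ V k, a (E k) * u ≠ w) ∧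
      ∀ (S : Set ℕ) (x : G), Tendsto (fun m => partProd (S.mulIndicator a) m) atTop (𝓝 x) →
        (partProd (S.mulIndicator a) (E (k + 1)))⁻¹ * x ∈ V k := by
  have hne : ∀ m, ∃ v, m ≤ v ∧ a v ≠ 1 := fun m => by
    by_contra! h
    exact absurd (ha.1 ((h m le_rfl).trans (h (m + 1) (by omega)).symm)) (by omega)
  have step : ∀ m, ∃ v, m ≤ v ∧ ∃ V : Set G, ∃ N, v < N ∧
      (∀ u ∈ V, ∀ w ∈ V, a v * u ≠ w) ∧
      ∀ (S : Set ℕ) (x : G), Tendsto (fun m => partProd (S.mulIndicator a) m) atTop (𝓝 x) →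
        ∀ n, N ≤ n → (partProd (S.mulIndicator a) n)⁻¹ * x ∈ V := by
    intro m
    obtain ⟨v, hmv, hv⟩ := hne m
    obtain ⟨V, hV, hsep⟩ := exists_mem_nhds_one_forall_mul_ne hv
    obtain ⟨N, hN⟩ := ha.exists_forall_inv_partProd_mul_mem_of_tendsto hV
    exact ⟨v, hmv, V, max N (v + 1), by omega, hsep,
      fun S x hx n hn => hN S x hx n (le_of_max_le_left hn)⟩
  choose v hmv V N hvN hsep hN using step
  obtain ⟨e, he⟩ : ∃ e : ℕ → ℕ, ∀ k, e (k + 1) = N (e k) :=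
    ⟨fun k => Nat.rec 0 (fun _ ek => N ek) k, fun _ => rfl⟩
  have hNv : ∀ k, N (e k) ≤ v (e (k + 1)) := fun k => he k ▸ hmv _
  exact ⟨fun k => v (e k), strictMono_nat_of_lt_succ fun k => (hvN _).trans_le (hNv k),
    fun k => V (e k), fun k => ⟨hsep _, fun S x hx => hN _ S x hx _ (hNv k)⟩⟩

theorem injective_of_ne_at_first_difference {α : Type*} {f : Set ℕ → α}
    (h : ∀ Z W k, (∀ j < k, j ∈ Z ↔ j ∈ W) → k ∈ Z → k ∉ W → f Z ≠ f W) :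
    Function.Injective f := by
  classical
  intro Z W hZW
  by_contra hne
  have hex : ∃ k, ¬(k ∈ Z ↔ k ∈ W) := by
    by_contra! hall
    exact hne (Set.ext hall)
  have hagree : ∀ j < Nat.find hex, j ∈ Z ↔ j ∈ W := fun j hj => not_not.mp (Nat.find_min hex hj)
  have hk := Nat.find_spec hex
  by_cases hkZ : Nat.find hex ∈ Z
  · exact h Z W _ hagree hkZ (fun hkW => hk (iff_of_true hkZ hkW)) hZW
  · exact h W Z _ (fun j hj => (hagree j hj).symm) (by tauto) hkZ hZW.symm

/-- A topological group containing an `f_1*`-productive sequence has cardinality at least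
the continuum. -/
theorem stmt_13 {G : Type*} [Group G] [TopologicalSpace G] [IsTopologicalGroup G] [T2Space G]
    (a : ℕ → G) (ha : F1StarProductive a) :
    Cardinal.continuum ≤ Cardinal.mk G := by
  obtain ⟨E, hE, V, hsep⟩ := ha.exists_strictMono_separating
  choose x hx using fun Z : Set ℕ => ha.exists_tendsto_partProd_mulIndicator (E '' Z)
  have hinj : Function.Injective x := by
    refine injective_of_ne_at_first_difference fun Z W k hZW hkZ hkW hxZW => ?_
    have hprefix : partProd (Z.mulIndicator (a ∘ E)) k = partProd (W.mulIndicator (a ∘ E)) k :=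
      partProd_congr fun j hj => Set.mulIndicator_eq_mulIndicator (hZW j hj) rfl
    have hZ := (hsep k).2 (E '' Z) (x Z) (hx Z)
    have hW := (hsep k).2 (E '' W) (x W) (hx W)
    rw [partProd_mulIndicator_image hE, partProd_succ_s13, Set.mulIndicator_of_mem hkZ] at hZ
    rw [partProd_mulIndicator_image hE, partProd_succ_s13, Set.mulIndicator_of_notMem hkW, mul_one,
      ← hprefix, ← hxZW] at hW
    refine (hsep k).1 _ hZ _ hW ?_
    simp [mul_assoc]
  simpa [Cardinal.mk_set_nat] using Cardinal.lift_mk_le_lift_mk_of_injective hinj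
end
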